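/- Let C be a d-dimensional smooth combinatorial cube in ℝ^d with d ≥ 3, and let x, y, z ∈ {1,…,d} be distinct. Suppose the faces F_{xz} and F_{x z̄} are parallel, and the faces F_{yz} and F_{y z̄} are parallel. Then the facets F_z and F_{z̄} are parallel. -/

import Mathlib

open Pointwise

noncomputable section

/-- A point of `ℝ^d` is a *lattice point* if all its coordinates are integers. -/
def IsLatticePoint {d : ℕ} (x : Fin d → ℝ) : Prop :=
  ∀ i, ∃ n : ℤ, x i = (n : ℝ)

/-- A *polytope* is the convex hull of finitely many points. -/
def IsPolytope {E : Type*} [AddCommGroup E] [Module ℝ E] (P : Set E) : Prop :=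
  ∃ V : Finset E, P = convexHull ℝ (V : Set E)

/-- A *lattice polytope* in `ℝ^d` is the convex hull of finitely many lattice points. -/
def IsLatticePolytope {d : ℕ} (P : Set (Fin d → ℝ)) : Prop :=
  ∃ V : Finset (Fin d → ℝ), (∀ v ∈ V, IsLatticePoint v) ∧
    P = convexHull ℝ (V : Set (Fin d → ℝ))

/-- The subset of `P` on which the linear functional `u` is maximized. -/
def maxFace {E : Type*} [AddCommGroup E] [Module ℝ E] (P : Set E) (u : E →ₗ[ℝ] ℝ) : Set E :=
  {x ∈ P | ∀ y ∈ P, u y ≤ u x}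

/-- `F` is a face of `P` if it is the maximizing set of some linear functional on `P`. -/
def IsFaceOf {E : Type*} [AddCommGroup E] [Module ℝ E] (P F : Set E) : Prop :=
  ∃ u : E →ₗ[ℝ] ℝ, F = maxFace P u

/-- The dimension of a subset: the rank of the direction of its affine span. -/
def dimSet {E : Type*} [AddCommGroup E] [Module ℝ E] (F : Set E) : ℕ :=
  Module.finrank ℝ (affineSpan ℝ F).direction

/-- Two sets are parallel if the directions (linear parts) of their affine spans coincide. -/
def AreParallel {E : Type*} [AddCommGroup E] [Module ℝ E] (F G : Set E) : Prop :=
  (affineSpan ℝ F).direction = (affineSpan ℝ G).direction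

/-- A facet is a face of codimension one. -/
def IsFacetOf {E : Type*} [AddCommGroup E] [Module ℝ E] (P F : Set E) : Prop :=
  IsFaceOf P F ∧ dimSet F + 1 = dimSet P

/-- A vertex of `P` is a point whose singleton is a face of `P`. -/
def IsVertexOf {E : Type*} [AddCommGroup E] [Module ℝ E] (P : Set E) (v : E) : Prop :=
  IsFaceOf P {v}

/-- An edge of `P` is a one-dimensional face of `P`. -/
def IsEdgeOf {E : Type*} [AddCommGroup E] [Module ℝ E] (P F : Set E) : Prop :=
  IsFaceOf P F ∧ dimSet F = 1

/-- A polytope in `ℝ^d` is simple if every vertex is contained in exactly `d` edges. -/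
def IsSimplePolytope {d : ℕ} (P : Set (Fin d → ℝ)) : Prop :=
  ∀ v : Fin d → ℝ, IsVertexOf P v →
    {F : Set (Fin d → ℝ) | IsEdgeOf P F ∧ v ∈ F}.ncard = d

/-- An integer vector is primitive if it is not a nontrivial integer multiple of
another integer vector (in particular it is nonzero). -/
def IsPrimitiveVector {d : ℕ} (u : Fin d → ℤ) : Prop :=
  ∀ (k : ℤ) (w : Fin d → ℤ), u = k • w → IsUnit k

/-- `u` is a primitive edge direction of `P` at the vertex `v`: a primitive lattice vector
pointing from `v` along an edge of `P` incident to `v`. -/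
def IsPrimitiveEdgeDirectionAt {d : ℕ} (P : Set (Fin d → ℝ)) (v : Fin d → ℝ)
    (u : Fin d → ℤ) : Prop :=
  IsPrimitiveVector u ∧
    ∃ F : Set (Fin d → ℝ), IsEdgeOf P F ∧ v ∈ F ∧
      ∃ ε : ℝ, 0 < ε ∧ (v + ε • fun i => (u i : ℝ)) ∈ F

/-- A lattice polytope is smooth if it is simple and, at each vertex, the primitive
edge directions form a `ℤ`-basis of `ℤ^d`. -/
def IsSmoothPolytope {d : ℕ} (P : Set (Fin d → ℝ)) : Prop :=
  IsLatticePolytope P ∧ IsSimplePolytope P ∧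
    ∀ v : Fin d → ℝ, IsVertexOf P v →
      ∃ b : Module.Basis (Fin d) ℤ (Fin d → ℤ), ∀ i, IsPrimitiveEdgeDirectionAt P v (b i)

/-- The unit cube `[0,1]^d`. -/
def unitCube (d : ℕ) : Set (Fin d → ℝ) := {x | ∀ i, x i ∈ Set.Icc (0 : ℝ) 1}

/-- A `d`-dimensional combinatorial cube: a `d`-dimensional lattice polytope whose face
poset is order-isomorphic to the face poset of the unit cube `[0,1]^d`. -/
def IsCombinatorialCube (d : ℕ) (C : Set (Fin d → ℝ)) : Prop :=
  IsLatticePolytope C ∧ dimSet C = d ∧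
    Nonempty ({F : Set (Fin d → ℝ) // IsFaceOf (unitCube d) F} ≃o
              {F : Set (Fin d → ℝ) // IsFaceOf C F})

/-- The pair `(P, Q)` has the Integer Decomposition Property: every lattice point of the
Minkowski sum `P + Q` is a sum of a lattice point of `P` and a lattice point of `Q`. -/
def IsIDPPair {d : ℕ} (P Q : Set (Fin d → ℝ)) : Prop :=
  ∀ x : Fin d → ℝ, IsLatticePoint x → x ∈ P + Q →
    ∃ p ∈ P, ∃ q ∈ Q, IsLatticePoint p ∧ IsLatticePoint q ∧ x = p + q

/-- `P` and `Q` are Minkowski equivalent (have the same normal fan): two linear functionals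
are maximized on the same face of `P` if and only if they are maximized on the same face
of `Q`. -/
def MinkowskiEquivalent {E : Type*} [AddCommGroup E] [Module ℝ E] (P Q : Set E) : Prop :=
  ∀ u v : E →ₗ[ℝ] ℝ, maxFace P u = maxFace P v ↔ maxFace Q u = maxFace Q v

/-- `P` is a `d`-dimensional prismatoid with top facet `T` and bottom facet `B`: a
`d`-dimensional lattice polytope whose face poset is order-isomorphic to the face poset of
a prism `Q × [0,1]` over a `(d-1)`-dimensional polytope `Q`, where `T` and `B` are the
faces corresponding to `Q × {1}` and `Q × {0}` respectively, and `T` and `B` are parallel. -/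
def IsPrismatoid (d : ℕ) (P T B : Set (Fin d → ℝ)) : Prop :=
  IsLatticePolytope P ∧ dimSet P = d ∧
    ∃ Q : Set (Fin (d - 1) → ℝ), IsPolytope Q ∧ dimSet Q = d - 1 ∧
      ∃ φ : {F : Set ((Fin (d - 1) → ℝ) × ℝ) // IsFaceOf (Q ×ˢ Set.Icc (0 : ℝ) 1) F} ≃o
            {F : Set (Fin d → ℝ) // IsFaceOf P F},
        (∃ hT : IsFaceOf (Q ×ˢ Set.Icc (0 : ℝ) 1) (Q ×ˢ ({1} : Set ℝ)),
            (φ ⟨Q ×ˢ ({1} : Set ℝ), hT⟩).1 = T) ∧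
        (∃ hB : IsFaceOf (Q ×ˢ Set.Icc (0 : ℝ) 1) (Q ×ˢ ({0} : Set ℝ)),
            (φ ⟨Q ×ˢ ({0} : Set ℝ), hB⟩).1 = B) ∧
        AreParallel T B

/-- The face `F_I^J` of the unit cube given by disjoint index sets `I` (coordinates pinned
to `0`) and `J` (coordinates pinned to `1`). -/
def cubeFace (d : ℕ) (I J : Set (Fin d)) : Set (Fin d → ℝ) :=
  {x ∈ unitCube d | (∀ k ∈ I, x k = 0) ∧ (∀ k ∈ J, x k = 1)}

/-- Under a fixed order isomorphism `φ` from the face poset of the unit cube to the face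
poset of `C`, the set `F` is the face of `C` corresponding to the face `F_I^J` of the
unit cube. -/
def IsCubeFaceImage {d : ℕ} {C : Set (Fin d → ℝ)}
    (φ : {F : Set (Fin d → ℝ) // IsFaceOf (unitCube d) F} ≃o
         {F : Set (Fin d → ℝ) // IsFaceOf C F})
    (I J : Set (Fin d)) (F : Set (Fin d → ℝ)) : Prop :=
  ∃ h : IsFaceOf (unitCube d) (cubeFace d I J), (φ ⟨cubeFace d I J, h⟩).1 = F

/-- The last coordinate index of `Fin d` (for `0 < d`). -/
def lastIdx (d : ℕ) (hd : 0 < d) : Fin d := ⟨d - 1, Nat.sub_lt hd Nat.one_pos⟩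

/-- The linear functional `x ↦ ⟨y, x⟩ = ∑ i, y i * x i` on `ℝ^d`. -/
def dotL {d : ℕ} (y : Fin d → ℝ) : (Fin d → ℝ) →ₗ[ℝ] ℝ :=
  ∑ i, y i • LinearMap.proj (R := ℝ) (φ := fun _ : Fin d => ℝ) i

/-!
A face of a polytope is cut out of the polytope by its own affine span, so two faces through a
common point with the same direction coincide, and a proper inclusion of faces strictly raises the
dimension. The faces of the cube through a fixed vertex form a Boolean lattice of rank `d`; along
a maximal chain of it the dimension of the corresponding faces of `C` jumps `d` times inside
`[0, d]`, hence by exactly one each time, and the face of `C` corresponding to `F_I^J` has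
dimension `d - |I| - |J|`. So `F_z` contains the distinct faces `F_{xz}`, `F_{yz}` of one
dimension less, which meet in `F_{xyz}`, and its direction is the sum of theirs; likewise for
`F_{z̄}`, `F_{x z̄}`, `F_{y z̄}`, and the hypotheses identify the two sums.
-/

open Module Set

section Faces

variable {E : Type*} [AddCommGroup E] [Module ℝ E]

theorem IsFaceOf.subset {P F : Set E} (hF : IsFaceOf P F) : F ⊆ P := by
  obtain ⟨u, rfl⟩ := hF
  exact fun _ hx => hx.1

theorem IsFaceOf.inter_affineSpan_eq {P F : Set E} (hF : IsFaceOf P F) (hne : F.Nonempty) :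
    P ∩ affineSpan ℝ F = F := by
  refine subset_antisymm ?_ fun p hp => ⟨hF.subset hp, subset_affineSpan ℝ F hp⟩
  obtain ⟨u, rfl⟩ := hF
  obtain ⟨a, ha⟩ := hne
  have hker : vectorSpan ℝ (maxFace P u) ≤ LinearMap.ker u := by
    rw [vectorSpan_def, Submodule.span_le]
    rintro _ ⟨b, hb, c, hc, rfl⟩
    simp [le_antisymm (hb.2 c hc.1) (hc.2 b hb.1)]
  rintro p ⟨hpP, hpF⟩
  have hpa : u (p - a) = 0 := hker <| direction_affineSpan ℝ (maxFace P u) ▸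
    AffineSubspace.vsub_mem_direction hpF (subset_affineSpan ℝ _ ha)
  rw [map_sub, sub_eq_zero] at hpa
  exact ⟨hpP, fun y hy => hpa ▸ ha.2 y hy⟩

theorem IsFaceOf.eq_of_direction_eq {P A B : Set E} (hA : IsFaceOf P A) (hB : IsFaceOf P B)
    {a : E} (haA : a ∈ A) (haB : a ∈ B)
    (h : (affineSpan ℝ A).direction = (affineSpan ℝ B).direction) : A = B := by
  have hspan : affineSpan ℝ A = affineSpan ℝ B := AffineSubspace.ext_of_direction_eq h
    ⟨a, subset_affineSpan ℝ A haA, subset_affineSpan ℝ B haB⟩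
  rw [← hA.inter_affineSpan_eq ⟨a, haA⟩, ← hB.inter_affineSpan_eq ⟨a, haB⟩, hspan]

variable [FiniteDimensional ℝ E]

theorem IsFaceOf.dimSet_lt_of_ssubset {P A B : Set E} (hA : IsFaceOf P A) (hB : IsFaceOf P B)
    (hne : A.Nonempty) (hAB : A ⊂ B) : dimSet A < dimSet B := by
  obtain ⟨a, ha⟩ := hne
  refine Submodule.finrank_lt_finrank_of_lt <|
    (AffineSubspace.direction_le (affineSpan_mono ℝ hAB.subset)).lt_of_ne fun h => ?_
  exact hAB.ne (hA.eq_of_direction_eq hB ha (hAB.subset ha) h)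

theorem direction_eq_sup_of_isFaceOf {P F A B : Set E} (hA : IsFaceOf P A) (hB : IsFaceOf P B)
    {a : E} (haA : a ∈ A) (haB : a ∈ B) (hAB : A ≠ B) (hAF : A ⊆ F) (hBF : B ⊆ F)
    (hdim : dimSet A = dimSet B) (hF : dimSet F = dimSet A + 1) :
    (affineSpan ℝ F).direction = (affineSpan ℝ A).direction ⊔ (affineSpan ℝ B).direction := by
  set DA := (affineSpan ℝ A).direction
  set DB := (affineSpan ℝ B).direction
  have hinf : finrank ℝ ↥(DA ⊓ DB) < finrank ℝ DA := by
    refine Submodule.finrank_lt_finrank_of_lt (inf_le_left.lt_of_ne fun h => hAB ?_)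
    exact hA.eq_of_direction_eq hB haA haB
      (Submodule.eq_of_le_of_finrank_le (inf_eq_left.mp h) hdim.ge)
  have hsup := Submodule.finrank_sup_add_finrank_inf_eq DA DB
  refine (Submodule.eq_of_le_of_finrank_le (sup_le ?_ ?_) ?_).symm
  · exact AffineSubspace.direction_le (affineSpan_mono ℝ hAF)
  · exact AffineSubspace.direction_le (affineSpan_mono ℝ hBF)
  · change finrank ℝ DA = finrank ℝ DB at hdim
    change finrank ℝ (affineSpan ℝ F).direction = finrank ℝ DA + 1 at hF
    omega

variable [TopologicalSpace E] [IsTopologicalAddGroup E] [ContinuousSMul ℝ E] [T2Space E]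

theorem IsFaceOf.nonempty {P F : Set E} (hP : IsPolytope P) (hne : P.Nonempty)
    (hF : IsFaceOf P F) : F.Nonempty := by
  obtain ⟨V, rfl⟩ := hP
  obtain ⟨u, rfl⟩ := hF
  obtain ⟨x, hx, hmax⟩ := (V.finite_toSet.isCompact_convexHull ℝ).exists_isMaxOn hne
    u.continuous_of_finiteDimensional.continuousOn
  exact ⟨x, hx, fun y hy => hmax hy⟩

end Faces

theorem StrictAnti.apply_union_add_card_le {ι : Type*} [DecidableEq ι] {r : Finset ι → ℕ}
    (hr : StrictAnti r) (s u : Finset ι) (hsu : Disjoint s u) : r (s ∪ u) + u.card ≤ r s := by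
  induction u using Finset.induction_on with
  | empty => simp
  | insert a u ha ih =>
    rw [Finset.disjoint_insert_right] at hsu
    have hlt : r (s ∪ insert a u) < r (s ∪ u) := by
      rw [Finset.union_insert]
      exact hr (Finset.ssubset_insert (by simp [hsu.1, ha]))
    rw [Finset.card_insert_of_notMem ha]
    have := ih hsu.2
    omega

theorem StrictAnti.apply_add_card_eq {ι : Type*} [Fintype ι] [DecidableEq ι]
    {r : Finset ι → ℕ} (hr : StrictAnti r) (h0 : r ∅ ≤ Fintype.card ι) (s : Finset ι) :
    r s + s.card = Fintype.card ι := by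
  have hle := hr.apply_union_add_card_le ∅ s (Finset.disjoint_empty_left s)
  have hge := hr.apply_union_add_card_le s sᶜ disjoint_compl_right
  rw [Finset.empty_union] at hle
  rw [Finset.union_compl, Finset.card_compl] at hge
  have := s.card_le_univ
  omega

section Cube

variable {d : ℕ}

theorem dotL_apply (y p : Fin d → ℝ) : dotL y p = ∑ i, y i * p i := by
  simp [dotL]

theorem cubeFace_isFaceOf {I J : Set (Fin d)} (hIJ : Disjoint I J) :
    IsFaceOf (unitCube d) (cubeFace d I J) := by
  classical
  -- maximise `∑_{i ∈ J} p i - ∑_{i ∈ I} p i`, whose maximum on the cube is attained at `1_J`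
  set c : Fin d → ℝ := J.indicator 1 - I.indicator 1
  set v : Fin d → ℝ := J.indicator 1
  have hterm : ∀ p ∈ unitCube d, ∀ i, c i * p i ≤ c i * v i ∧
      (c i * p i = c i * v i ↔ (i ∈ I → p i = 0) ∧ (i ∈ J → p i = 1)) := by
    intro p hp i
    obtain ⟨h0, h1⟩ := hp i
    by_cases hJ : i ∈ J
    · have hI : i ∉ I := hIJ.notMem_of_mem_right hJ
      simp [c, v, hJ, hI, h1]
    · by_cases hI : i ∈ I
      · simp [c, v, hJ, hI, h0, neg_eq_zero]
      · simp [c, v, hJ, hI]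
  have hv : v ∈ unitCube d := fun i => by by_cases hi : i ∈ J <;> simp [v, hi]
  have hle : ∀ p ∈ unitCube d, dotL c p ≤ dotL c v := fun p hp => by
    simp only [dotL_apply]
    exact Finset.sum_le_sum fun i _ => (hterm p hp i).1
  have heq : ∀ p ∈ unitCube d, dotL c p = dotL c v ↔ p ∈ cubeFace d I J := fun p hp => by
    simp only [dotL_apply, Finset.sum_eq_sum_iff_of_le fun i _ => (hterm p hp i).1,
      Finset.mem_univ, true_implies, (hterm p hp _).2, forall_and, cubeFace, mem_ofPred_eq, hp,
      true_and]
  refine ⟨dotL c, Set.ext fun p => ⟨fun hp => ⟨hp.1, fun q hq => ?_⟩, fun hp => ?_⟩⟩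
  · exact ((heq p hp.1).2 hp).symm ▸ hle q hq
  · exact (heq p hp.1).1 ((hle p hp.1).antisymm (hp.2 v hv))

theorem cubeFace_anti {I I' J J' : Set (Fin d)} (hI : I ⊆ I') (hJ : J ⊆ J') :
    cubeFace d I' J' ⊆ cubeFace d I J :=
  fun _ hp => ⟨hp.1, fun k hk => hp.2.1 k (hI hk), fun k hk => hp.2.2 k (hJ hk)⟩

theorem not_cubeFace_subset {I J I' J' : Set (Fin d)} (hIJ' : Disjoint I' J') {k : Fin d}
    (hk : k ∈ I ∪ J) (hk' : k ∉ I' ∪ J') : ¬cubeFace d I' J' ⊆ cubeFace d I J := by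
  classical
  -- the vertex `1_{J'}` of `F_{I'}^{J'}` moved halfway along the free coordinate `k`
  set p : Fin d → ℝ := Function.update (J'.indicator 1) k (1 / 2)
  have hp : p ∈ cubeFace d I' J' := by
    refine ⟨fun i => ?_, fun i hi => ?_, fun i hi => ?_⟩
    · by_cases hik : i = k
      · subst hik; norm_num [p]
      · by_cases hi : i ∈ J' <;> simp [p, hik, hi]
    · have hik : i ≠ k := by rintro rfl; exact hk' (Or.inl hi)
      simp [p, hik, hIJ'.notMem_of_mem_left hi]
    · have hik : i ≠ k := by rintro rfl; exact hk' (Or.inr hi)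
      simp [p, hik, hi]
  intro h
  obtain ⟨-, h0, h1⟩ := h hp
  rcases hk with hk | hk
  · simpa [p] using h0 k hk
  · have := h1 k hk
    norm_num [p] at this

end Cube

section CubeFaceImage

variable {d : ℕ} {C : Set (Fin d → ℝ)}
  (φ : {F : Set (Fin d → ℝ) // IsFaceOf (unitCube d) F} ≃o {F : Set (Fin d → ℝ) // IsFaceOf C F})

theorem dimSet_add_ncard_of_isCubeFaceImage (hC : IsPolytope C) (hne : C.Nonempty)
    {I J : Set (Fin d)} (hIJ : Disjoint I J) {F : Set (Fin d → ℝ)}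
    (hF : IsCubeFaceImage φ I J F) : dimSet F + I.ncard + J.ncard = d := by
  classical
  -- the faces through the vertex `1_J`, indexed by the set `s` of frozen coordinates
  let r : Finset (Fin d) → ℕ := fun s =>
    dimSet (φ ⟨cubeFace d (↑s \ J) (↑s ∩ J), cubeFace_isFaceOf disjoint_sdiff_inter⟩).1
  have hr : StrictAnti r := by
    intro s t hst
    obtain ⟨k, hkt, hks⟩ := Finset.exists_of_ssubset hst
    have hsub : cubeFace d (↑t \ J) (↑t ∩ J) ⊂ cubeFace d (↑s \ J) (↑s ∩ J) := by
      refine ⟨cubeFace_anti (sdiff_subset_sdiff_left (Finset.coe_subset.2 hst.subset))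
        (inter_subset_inter_left J (Finset.coe_subset.2 hst.subset)), ?_⟩
      exact not_cubeFace_subset disjoint_sdiff_inter (by simpa [sdiff_union_inter] using hkt)
        (by simpa [sdiff_union_inter] using hks)
    exact (φ _).2.dimSet_lt_of_ssubset (φ _).2 ((φ _).2.nonempty hC hne)
      (φ.strictMono (show (⟨_, _⟩ : {F // IsFaceOf (unitCube d) F}) < ⟨_, _⟩ from hsub))
  have h0 : r ∅ ≤ Fintype.card (Fin d) := by
    simpa [r, dimSet] using Submodule.finrank_le (affineSpan ℝ (φ ⟨_, _⟩).1).direction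
  obtain ⟨-, rfl⟩ := hF
  have := hr.apply_add_card_eq h0 (I ∪ J).toFinset
  have hdiff : (I ∪ J) \ J = I := by rw [union_sdiff_right, hIJ.sdiff_eq_left]
  have hinter : (I ∪ J) ∩ J = J := union_inter_cancel_right
  simp only [r, coe_toFinset, hdiff, hinter, ← ncard_eq_toFinset_card', ncard_union_eq hIJ,
    Fintype.card_fin] at this
  rwa [add_assoc]

theorem subset_of_isCubeFaceImage {I J I' J' : Set (Fin d)} (hI : I ⊆ I') (hJ : J ⊆ J')
    {F F' : Set (Fin d → ℝ)} (hF : IsCubeFaceImage φ I J F) (hF' : IsCubeFaceImage φ I' J' F') :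
    F' ⊆ F := by
  obtain ⟨-, rfl⟩ := hF
  obtain ⟨-, rfl⟩ := hF'
  exact φ.monotone (cubeFace_anti hI hJ)

theorem not_subset_of_isCubeFaceImage {I J I' J' : Set (Fin d)} (hIJ' : Disjoint I' J')
    {k : Fin d} (hk : k ∈ I ∪ J) (hk' : k ∉ I' ∪ J') {F F' : Set (Fin d → ℝ)}
    (hF : IsCubeFaceImage φ I J F) (hF' : IsCubeFaceImage φ I' J' F') : ¬F' ⊆ F := by
  obtain ⟨-, rfl⟩ := hF
  obtain ⟨-, rfl⟩ := hF'
  exact fun h => not_cubeFace_subset hIJ' hk hk' (φ.le_iff_le.1 h)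

theorem direction_eq_sup_of_isCubeFaceImage (hC : IsPolytope C) (hne : C.Nonempty)
    {I J : Set (Fin d)} (hIJ : Disjoint I J) {x y : Fin d} (hxy : x ≠ y) (hx : x ∉ I ∪ J)
    (hy : y ∉ I ∪ J) {F A B : Set (Fin d → ℝ)} (hF : IsCubeFaceImage φ I J F)
    (hA : IsCubeFaceImage φ (insert x I) J A) (hB : IsCubeFaceImage φ (insert y I) J B) :
    (affineSpan ℝ F).direction = (affineSpan ℝ A).direction ⊔ (affineSpan ℝ B).direction := by
  have hxJ : x ∉ J := fun h => hx (Or.inr h)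
  have hyJ : y ∉ J := fun h => hy (Or.inr h)
  have hxI : Disjoint (insert x I) J := disjoint_insert_left.2 ⟨hxJ, hIJ⟩
  have hyI : Disjoint (insert y I) J := disjoint_insert_left.2 ⟨hyJ, hIJ⟩
  have hxyI : Disjoint (insert x (insert y I)) J := disjoint_insert_left.2 ⟨hxJ, hyI⟩
  have hdF := dimSet_add_ncard_of_isCubeFaceImage φ hC hne hIJ hF
  have hdA := dimSet_add_ncard_of_isCubeFaceImage φ hC hne hxI hA
  have hdB := dimSet_add_ncard_of_isCubeFaceImage φ hC hne hyI hB
  rw [ncard_insert_of_notMem fun h => hx (Or.inl h)] at hdA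
  rw [ncard_insert_of_notMem fun h => hy (Or.inl h)] at hdB
  have hxyFace : IsCubeFaceImage φ (insert x (insert y I)) J _ := ⟨cubeFace_isFaceOf hxyI, rfl⟩
  obtain ⟨a, ha⟩ := (φ ⟨_, hxyFace.1⟩).2.nonempty hC hne
  have hAface : IsFaceOf C A := by obtain ⟨-, rfl⟩ := hA; exact (φ _).2
  have hBface : IsFaceOf C B := by obtain ⟨-, rfl⟩ := hB; exact (φ _).2
  refine direction_eq_sup_of_isFaceOf hAface hBface
    (subset_of_isCubeFaceImage φ (insert_subset_insert (subset_insert y I)) subset_rfl hA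
      hxyFace ha)
    (subset_of_isCubeFaceImage φ (subset_insert x _) subset_rfl hB hxyFace ha)
    ?_ (subset_of_isCubeFaceImage φ (subset_insert x I) subset_rfl hF hA)
    (subset_of_isCubeFaceImage φ (subset_insert y I) subset_rfl hF hB) (by omega) (by omega)
  rintro rfl
  exact not_subset_of_isCubeFaceImage φ hyI (Or.inl (mem_insert x I))
    (by simpa [hxy] using hx) hA hB subset_rfl

end CubeFaceImage

theorem parallel_codim_two_pairs_give_parallel_facets_general
    (d : ℕ) (C : Set (Fin d → ℝ))
    (hC : IsCombinatorialCube d C)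
    (φ : {F : Set (Fin d → ℝ) // IsFaceOf (unitCube d) F} ≃o
         {F : Set (Fin d → ℝ) // IsFaceOf C F})
    (x y z : Fin d) (hxy : x ≠ y) (hxz : x ≠ z) (hyz : y ≠ z)
    (Fxz Fxbz Fyz Fybz Fz Fbz : Set (Fin d → ℝ))
    (hFxz : IsCubeFaceImage φ {x, z} ∅ Fxz)
    (hFxbz : IsCubeFaceImage φ {x} {z} Fxbz)
    (hFyz : IsCubeFaceImage φ {y, z} ∅ Fyz)
    (hFybz : IsCubeFaceImage φ {y} {z} Fybz)
    (hFz : IsCubeFaceImage φ {z} ∅ Fz)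
    (hFbz : IsCubeFaceImage φ ∅ {z} Fbz)
    (h1 : AreParallel Fxz Fxbz) (h2 : AreParallel Fyz Fybz) :
    AreParallel Fz Fbz := by
  obtain ⟨⟨V, -, hV⟩, hdim, -⟩ := hC
  have hP : IsPolytope C := ⟨V, hV⟩
  have hne : C.Nonempty := nonempty_iff_ne_empty.2 fun h =>
    (Fin.pos x).ne (by
      rw [← hdim, h, dimSet, AffineSubspace.span_empty, AffineSubspace.direction_bot, finrank_bot])
  rw [singleton_def x] at hFxbz
  rw [singleton_def y] at hFybz
  unfold AreParallel at *
  rw [direction_eq_sup_of_isCubeFaceImage φ hP hne (disjoint_empty _) hxy (by simpa using hxz)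
      (by simpa using hyz) hFz hFxz hFyz,
    direction_eq_sup_of_isCubeFaceImage φ hP hne (empty_disjoint _) hxy (by simpa using hxz)
      (by simpa using hyz) hFbz hFxbz hFybz, h1, h2]

/-- For a `d`-dimensional smooth combinatorial cube with `d ≥ 3` and distinct
`x, y, z`, if `F_{xz} ∥ F_{x z̄}` and `F_{yz} ∥ F_{y z̄}`, then `F_z ∥ F_{z̄}`. -/
theorem parallel_codim_two_pairs_give_parallel_facets
    (d : ℕ) (hd : 3 ≤ d) (C : Set (Fin d → ℝ))
    (hC : IsCombinatorialCube d C) (hsmooth : IsSmoothPolytope C)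
    (φ : {F : Set (Fin d → ℝ) // IsFaceOf (unitCube d) F} ≃o
         {F : Set (Fin d → ℝ) // IsFaceOf C F})
    (x y z : Fin d) (hxy : x ≠ y) (hxz : x ≠ z) (hyz : y ≠ z)
    (Fxz Fxbz Fyz Fybz Fz Fbz : Set (Fin d → ℝ))
    (hFxz : IsCubeFaceImage φ {x, z} ∅ Fxz)
    (hFxbz : IsCubeFaceImage φ {x} {z} Fxbz)
    (hFyz : IsCubeFaceImage φ {y, z} ∅ Fyz)
    (hFybz : IsCubeFaceImage φ {y} {z} Fybz)
    (hFz : IsCubeFaceImage φ {z} ∅ Fz)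
    (hFbz : IsCubeFaceImage φ ∅ {z} Fbz)
    (h1 : AreParallel Fxz Fxbz) (h2 : AreParallel Fyz Fybz) :
    AreParallel Fz Fbz :=
  parallel_codim_two_pairs_give_parallel_facets_general d C hC φ x y z hxy hxz hyz Fxz Fxbz Fyz Fybz
    Fz Fbz hFxz hFxbz hFyz hFybz hFz hFbz h1 h2
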